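/- Let g: ℝ → ℝ be continuous and monotone increasing with g(0) = 0 and g(s)s > 0 for s ≠ 0. Then there exists a concave, strictly increasing function h: [0,∞) → [0,∞) with h(0) = 0 such that h(s·g(s)) ≥ s² + g(s)² for all s with |s| ≤ 1. -/
import Mathlib


/-- For a continuous monotone increasing `g` with `g 0 = 0` and `g(s)·s > 0` for `s ≠ 0`,
there is a concave, strictly increasing `h` on `[0,∞)` with `h 0 = 0` such that
`h(s·g(s)) ≥ s² + g(s)²` for `|s| ≤ 1`. -/
theorem exists_concave_majorant
    (g : ℝ → ℝ) (hgc : Continuous g) (hgm : Monotone g) (hg0 : g 0 = 0)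
    (hsign : ∀ s : ℝ, s ≠ 0 → 0 < g s * s) :
    ∃ h : ℝ → ℝ,
      ConcaveOn ℝ (Set.Ici 0) h ∧
      StrictMonoOn h (Set.Ici 0) ∧
      h 0 = 0 ∧
      ∀ s : ℝ, |s| ≤ 1 → s ^ 2 + g s ^ 2 ≤ h (s * g s) := by
  -- a uniform bound on s² + g(s)² for |s| ≤ 1
  set C : ℝ := 1 + (|g 1| + |g (-1)|) ^ 2 with hCdef
  have hCpos : 0 < C := by positivity
  have hbound : ∀ s : ℝ, |s| ≤ 1 → s ^ 2 + g s ^ 2 ≤ C := by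
    intro s hs
    obtain ⟨h1, h2⟩ := abs_le.mp hs
    have hg1 : g s ≤ g 1 := hgm h2
    have hg2 : g (-1) ≤ g s := hgm h1
    nlinarith [le_abs_self (g 1), neg_abs_le (g (-1)), abs_nonneg (g 1),
      abs_nonneg (g (-1))]
  -- key compactness fact
  have key : ∀ ε : ℝ, 0 < ε → ∃ δ : ℝ, 0 < δ ∧
      ∀ s : ℝ, |s| ≤ 1 → s * g s ≤ δ → s ^ 2 + g s ^ 2 ≤ ε := by
    intro ε hε
    set K : Set ℝ := Set.Icc (-1 : ℝ) 1 ∩ {s : ℝ | ε ≤ s ^ 2 + g s ^ 2} with hKdef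
    have hKc : IsCompact K :=
      isCompact_Icc.inter_right (isClosed_le continuous_const (by fun_prop))
    rcases K.eq_empty_or_nonempty with hK | hK
    · refine ⟨1, one_pos, fun s hs _ => ?_⟩
      by_contra hcon
      push_neg at hcon
      have : s ∈ K := ⟨abs_le.mp hs |>.imp id id |> fun h => ⟨h.1, h.2⟩, le_of_lt hcon⟩
      rw [hK] at this
      exact this
    · obtain ⟨s₀, hs₀K, hmin⟩ := hKc.exists_isMinOn hK
        ((continuous_id.mul hgc).continuousOn)
      have hs₀ne : s₀ ≠ 0 := by
        rintro rfl
        have := hs₀K.2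
        simp only [Set.mem_setOf_eq, hg0] at this
        nlinarith
      have hF0 : 0 < s₀ * g s₀ := by
        have := hsign s₀ hs₀ne; linarith [this, mul_comm (g s₀) s₀]
      refine ⟨s₀ * g s₀ / 2, by linarith, fun s hs hsδ => ?_⟩
      by_contra hcon
      push_neg at hcon
      have hsK : s ∈ K := ⟨abs_le.mp hs |>.imp id id |> fun h => ⟨h.1, h.2⟩, le_of_lt hcon⟩
      have := hmin hsK
      simp only [Set.mem_setOf_eq] at this
      have : s₀ * g s₀ ≤ s * g s := this
      linarith
  choose δ hδpos hδ using fun n : ℕ => key ((1 / 2 : ℝ) ^ n) (by positivity)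
  -- the affine family and its infimum
  set L : ℕ → ℝ → ℝ := fun n t => (1 / 2 : ℝ) ^ n + (C / δ n) * t with hLdef
  have hLnonneg : ∀ n t, 0 ≤ t → 0 ≤ L n t := by
    intro n t ht
    have : 0 ≤ C / δ n := le_of_lt (div_pos hCpos (hδpos n))
    have := mul_nonneg this ht
    simp only [hLdef]
    positivity
  set h0 : ℝ → ℝ := fun t => ⨅ n : ℕ, L n t with h0def
  have hbdd : ∀ t : ℝ, 0 ≤ t → BddBelow (Set.range fun n : ℕ => L n t) := by
    intro t ht
    exact ⟨0, by rintro x ⟨n, rfl⟩; exact hLnonneg n t ht⟩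
  have h0le : ∀ t : ℝ, 0 ≤ t → ∀ n : ℕ, h0 t ≤ L n t := by
    intro t ht n; exact ciInf_le (hbdd t ht) n
  have h0nonneg : ∀ t : ℝ, 0 ≤ t → 0 ≤ h0 t := by
    intro t ht
    exact le_ciInf fun n => hLnonneg n t ht
  have h0mono : ∀ x y : ℝ, 0 ≤ x → x ≤ y → h0 x ≤ h0 y := by
    intro x y hx hxy
    refine ciInf_mono (hbdd x hx) fun n => ?_
    simp only [hLdef]
    have : 0 ≤ C / δ n := le_of_lt (div_pos hCpos (hδpos n))
    nlinarith
  refine ⟨fun t => h0 t + t, ?_, ?_, ?_, ?_⟩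
  · -- concavity
    refine ⟨convex_Ici 0, ?_⟩
    intro x hx y hy a b ha hb hab
    simp only [smul_eq_mul]
    have hx0 : (0 : ℝ) ≤ x := hx
    have hy0 : (0 : ℝ) ≤ y := hy
    have hxy0 : (0 : ℝ) ≤ a * x + b * y := by positivity
    have hmain : a * h0 x + b * h0 y ≤ h0 (a * x + b * y) := by
      refine le_ciInf fun n => ?_
      have h1 : a * h0 x ≤ a * L n x :=
        mul_le_mul_of_nonneg_left (h0le x hx0 n) ha
      have h2 : b * h0 y ≤ b * L n y :=
        mul_le_mul_of_nonneg_left (h0le y hy0 n) hb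
      have heq : L n (a * x + b * y) = a * L n x + b * L n y := by
        simp only [hLdef]
        have : a = 1 - b := by linarith
        subst this
        ring
      rw [heq]; linarith
    linarith
  · -- strict monotonicity
    intro x hx y hy hxy
    have := h0mono x y hx (le_of_lt hxy)
    simpa using by linarith
  · -- h 0 = 0
    have h1 : h0 0 ≤ 0 := by
      by_contra hcon
      push_neg at hcon
      obtain ⟨n, hn⟩ := exists_pow_lt_of_lt_one hcon (by norm_num : (1 / 2 : ℝ) < 1)
      have := h0le 0 le_rfl n
      simp only [hLdef, mul_zero, add_zero] at this
      linarith
    have h2 : 0 ≤ h0 0 := h0nonneg 0 le_rfl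
    simp only [add_zero]
    linarith
  · -- majorization
    intro s hs
    set t := s * g s with htdef
    have ht : 0 ≤ t := by
      rcases eq_or_ne s 0 with rfl | hsne
      · simp [htdef]
      · have := hsign s hsne
        have : 0 < s * g s := by linarith [mul_comm (g s) s]
        linarith
    have hmain : s ^ 2 + g s ^ 2 ≤ h0 t := by
      refine le_ciInf fun n => ?_
      rcases le_or_gt t (δ n) with h1 | h1
      · have := hδ n s hs h1
        have hnn : 0 ≤ (C / δ n) * t := mul_nonneg (le_of_lt (div_pos hCpos (hδpos n))) ht
        simp only [hLdef]
        linarith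
      · have hC : C / δ n * δ n = C := div_mul_cancel₀ C (ne_of_gt (hδpos n))
        have : C / δ n * δ n ≤ C / δ n * t :=
          mul_le_mul_of_nonneg_left (le_of_lt h1) (le_of_lt (div_pos hCpos (hδpos n)))
        have hb := hbound s hs
        have hp : (0 : ℝ) < (1 / 2 : ℝ) ^ n := by positivity
        simp only [hLdef]
        linarith
    show s ^ 2 + g s ^ 2 ≤ h0 t + t
    linarith
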